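/- arXiv:2104.01427 — 3 statements merged into one kernel-verified Lean document; each statement's English description precedes it below -/
import Mathlib

section
/- The function u(x,t) = a₂ · tanh(x − ((5a + α a₂²)/5) t)² satisfies the Gardner-Kawahara equation u_t + a u_x + λ u u_x − α u² u_x + μ u_xxx + β u_xxxxx = 0, where β = α a₂²/360, λ = 16 α a₂/15, and μ = α a₂²/45. -/
/-!
Since `tanh' = 1 - tanh²`, the `x`-derivative of `p(tanh (x - c t))` for a polynomial `p` is
`q(tanh (x - c t))` with `q = p' · (1 - X²)`, and the `t`-derivative is `-c` times it. Hence every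
term of the equation is a polynomial in `T = tanh (x - c t)`, and the equation becomes a polynomial
identity in `T`, which holds for the stated values of `β`, `λ`, `μ`, `c`.
-/

open Polynomial

theorem Real.hasDerivAt_tanh (x : ℝ) : HasDerivAt Real.tanh (1 - Real.tanh x ^ 2) x := by
  have h := (Real.hasDerivAt_sinh x).div (Real.hasDerivAt_cosh x) (Real.cosh_pos x).ne'
  rw [show Real.tanh = Real.sinh / Real.cosh from funext Real.tanh_eq_sinh_div_cosh]
  refine h.congr_deriv ?_
  rw [Pi.div_apply]
  field_simp

noncomputable def tanhDerivPoly (p : ℝ[X]) : ℝ[X] := derivative p * (1 - X ^ 2)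

theorem hasDerivAt_eval_tanh (p : ℝ[X]) (x : ℝ) :
    HasDerivAt (fun y => p.eval (Real.tanh y)) ((tanhDerivPoly p).eval (Real.tanh x)) x := by
  rw [tanhDerivPoly, eval_mul]
  exact (p.hasDerivAt (Real.tanh x)).comp x (Real.hasDerivAt_tanh x) |>.congr_deriv (by simp)

theorem deriv_eval_tanh (p : ℝ[X]) :
    deriv (fun y => p.eval (Real.tanh y)) = fun y => (tanhDerivPoly p).eval (Real.tanh y) :=
  funext fun x => (hasDerivAt_eval_tanh p x).deriv

theorem iteratedDeriv_eval_tanh (n : ℕ) (p : ℝ[X]) :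
    iteratedDeriv n (fun y => p.eval (Real.tanh y))
      = fun y => (tanhDerivPoly^[n] p).eval (Real.tanh y) := by
  induction n generalizing p with
  | zero => rfl
  | succ n ih => rw [iteratedDeriv_succ', deriv_eval_tanh, ih, Function.iterate_succ_apply]

theorem iteratedDeriv_eval_tanh_sub (n : ℕ) (p : ℝ[X]) (b x : ℝ) :
    iteratedDeriv n (fun y => p.eval (Real.tanh (y - b))) x
      = (tanhDerivPoly^[n] p).eval (Real.tanh (x - b)) := by
  rw [iteratedDeriv_comp_sub_const n (fun y => p.eval (Real.tanh y)), iteratedDeriv_eval_tanh]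

theorem hasDerivAt_eval_tanh_sub_mul (p : ℝ[X]) (x c t : ℝ) :
    HasDerivAt (fun s => p.eval (Real.tanh (x - c * s)))
      (-c * (tanhDerivPoly p).eval (Real.tanh (x - c * t))) t := by
  have hwave : HasDerivAt (fun s => x - c * s) (-c) t := by
    simpa using ((hasDerivAt_id t).const_mul c).const_sub x
  exact (hasDerivAt_eval_tanh p (x - c * t)).comp t hwave |>.congr_deriv (mul_comm _ _)

theorem tanhDerivPoly_C_mul (a : ℝ) (p : ℝ[X]) :
    tanhDerivPoly (C a * p) = C a * tanhDerivPoly p := by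
  rw [tanhDerivPoly, tanhDerivPoly, derivative_C_mul, mul_assoc]

theorem iterate_tanhDerivPoly_C_mul (n : ℕ) (a : ℝ) (p : ℝ[X]) :
    tanhDerivPoly^[n] (C a * p) = C a * tanhDerivPoly^[n] p := by
  induction n generalizing p with
  | zero => rfl
  | succ n ih =>
    rw [Function.iterate_succ_apply, Function.iterate_succ_apply, tanhDerivPoly_C_mul, ih]

theorem tanhDerivPoly_X_sq : tanhDerivPoly (X ^ 2) = 2 * X - 2 * X ^ 3 := by
  simp [tanhDerivPoly]
  ring

theorem iterate_three_tanhDerivPoly_X_sq :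
    tanhDerivPoly^[3] (X ^ 2) = -16 * X + 40 * X ^ 3 - 24 * X ^ 5 := by
  have h₂ : tanhDerivPoly (2 * X - 2 * X ^ 3) = 2 - 8 * X ^ 2 + 6 * X ^ 4 := by
    simp [tanhDerivPoly, derivative_mul, C_ofNat]
    ring
  have h₃ : tanhDerivPoly (2 - 8 * X ^ 2 + 6 * X ^ 4) = -16 * X + 40 * X ^ 3 - 24 * X ^ 5 := by
    simp [tanhDerivPoly, derivative_mul, C_ofNat]
    ring
  simp only [Function.iterate_succ_apply', Function.iterate_zero_apply, tanhDerivPoly_X_sq, h₂,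
    h₃]

theorem iterate_five_tanhDerivPoly_X_sq :
    tanhDerivPoly^[5] (X ^ 2) = 272 * X - 1232 * X ^ 3 + 1680 * X ^ 5 - 720 * X ^ 7 := by
  have h₄ : tanhDerivPoly (-16 * X + 40 * X ^ 3 - 24 * X ^ 5)
      = -16 + 136 * X ^ 2 - 240 * X ^ 4 + 120 * X ^ 6 := by
    simp [tanhDerivPoly, derivative_mul, C_ofNat]
    ring
  have h₅ : tanhDerivPoly (-16 + 136 * X ^ 2 - 240 * X ^ 4 + 120 * X ^ 6)
      = 272 * X - 1232 * X ^ 3 + 1680 * X ^ 5 - 720 * X ^ 7 := by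
    simp [tanhDerivPoly, derivative_mul, C_ofNat]
    ring
  rw [Function.iterate_succ_apply', Function.iterate_succ_apply', iterate_three_tanhDerivPoly_X_sq,
    h₄, h₅]

/-- The tanh-squared solution (Set 1) of the Gardner-Kawahara equation. -/
theorem gardner_kawahara_tanh_solution_set1
    (a alpha a2 : ℝ)
    (beta lam mu c : ℝ)
    (hbeta : beta = alpha * a2 ^ 2 / 360)
    (hlam : lam = 16 * alpha * a2 / 15)
    (hmu : mu = alpha * a2 ^ 2 / 45)
    (hc : c = (5 * a + alpha * a2 ^ 2) / 5)
    (u : ℝ → ℝ → ℝ)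
    (hu : ∀ x t, u x t = a2 * (Real.tanh (x - c * t)) ^ 2) :
    ∀ x t : ℝ,
      deriv (fun t' => u x t') t + a * deriv (fun x' => u x' t) x
        + lam * u x t * deriv (fun x' => u x' t) x
        - alpha * (u x t) ^ 2 * deriv (fun x' => u x' t) x
        + mu * iteratedDeriv 3 (fun x' => u x' t) x
        + beta * iteratedDeriv 5 (fun x' => u x' t) x = 0 := by
  intro x t
  obtain rfl : u = fun x t => (C a2 * X ^ 2).eval (Real.tanh (x - c * t)) := by
    funext x t
    simp [hu]
  rw [(hasDerivAt_eval_tanh_sub_mul _ x c t).deriv, ← iteratedDeriv_one,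
    iteratedDeriv_eval_tanh_sub, iteratedDeriv_eval_tanh_sub, iteratedDeriv_eval_tanh_sub]
  simp only [tanhDerivPoly_C_mul, iterate_tanhDerivPoly_C_mul, Function.iterate_one,
    tanhDerivPoly_X_sq, iterate_three_tanhDerivPoly_X_sq, iterate_five_tanhDerivPoly_X_sq,
    eval_mul, eval_C, eval_pow, eval_X, eval_add, eval_sub, eval_ofNat, eval_neg]
  subst hbeta hlam hmu hc
  ring
end

section
/- For any smooth solution u(x,t) of the Gardner-Kawahara equation, the conservation law D_t(u²/2) + D_x(−(α/4) u⁴ + (λ/3) u³ + (a/2) u² + β u u_xxxx − β u_x u_xxx + (β/2) u_xx² + μ u u_xx − (μ/2) u_x²) = 0 holds identically. -/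
private lemma flux_deriv (a lam alpha mu beta : ℝ) (f : ℝ → ℝ) (hf : ContDiff ℝ (⊤ : ℕ∞) f) (x : ℝ) :
    deriv (fun x' =>
        -(alpha / 4) * f x' ^ 4 + lam / 3 * f x' ^ 3 + a / 2 * f x' ^ 2
          + beta * f x' * iteratedDeriv 4 f x'
          - beta * deriv f x' * iteratedDeriv 3 f x'
          + beta / 2 * (iteratedDeriv 2 f x') ^ 2
          + mu * f x' * iteratedDeriv 2 f x'
          - mu / 2 * (deriv f x') ^ 2) x
      = f x * (a * deriv f x + lam * f x * deriv f x - alpha * f x ^ 2 * deriv f x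
          + mu * iteratedDeriv 3 f x + beta * iteratedDeriv 5 f x) := by
  have hdn : ∀ n : ℕ, HasDerivAt (iteratedDeriv n f) (iteratedDeriv (n + 1) f x) x := by
    intro n
    have hd : DifferentiableAt ℝ (iteratedDeriv n f) x :=
      (hf.differentiable_iteratedDeriv n (by exact_mod_cast WithTop.coe_lt_top _)) x
    simpa [iteratedDeriv_succ] using hd.hasDerivAt
  have h0 : HasDerivAt f (deriv f x) x := (hf.differentiable (by simp) x).hasDerivAt
  have h1 : HasDerivAt (deriv f) (iteratedDeriv 2 f x) x := by
    have := hdn 1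
    simpa [iteratedDeriv_one] using this
  have H : HasDerivAt (fun x' =>
        -(alpha / 4) * f x' ^ 4 + lam / 3 * f x' ^ 3 + a / 2 * f x' ^ 2
          + beta * f x' * iteratedDeriv 4 f x'
          - beta * deriv f x' * iteratedDeriv 3 f x'
          + beta / 2 * (iteratedDeriv 2 f x') ^ 2
          + mu * f x' * iteratedDeriv 2 f x'
          - mu / 2 * (deriv f x') ^ 2)
      (-(alpha / 4) * (4 * f x ^ 3 * deriv f x)
        + lam / 3 * (3 * f x ^ 2 * deriv f x)
        + a / 2 * (2 * f x ^ 1 * deriv f x)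
        + beta * (deriv f x * iteratedDeriv 4 f x + f x * iteratedDeriv 5 f x)
        - beta * (iteratedDeriv 2 f x * iteratedDeriv 3 f x + deriv f x * iteratedDeriv 4 f x)
        + beta / 2 * (2 * iteratedDeriv 2 f x ^ 1 * iteratedDeriv 3 f x)
        + mu * (deriv f x * iteratedDeriv 2 f x + f x * iteratedDeriv 3 f x)
        - mu / 2 * (2 * deriv f x ^ 1 * iteratedDeriv 2 f x)) x := by
    have e4 : HasDerivAt (fun x' => -(alpha / 4) * f x' ^ 4)
        (-(alpha / 4) * (4 * f x ^ 3 * deriv f x)) x := by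
      simpa using ((h0.pow 4).const_mul (-(alpha / 4)))
    have e3 : HasDerivAt (fun x' => lam / 3 * f x' ^ 3)
        (lam / 3 * (3 * f x ^ 2 * deriv f x)) x := by
      simpa using ((h0.pow 3).const_mul (lam / 3))
    have e2 : HasDerivAt (fun x' => a / 2 * f x' ^ 2)
        (a / 2 * (2 * f x ^ 1 * deriv f x)) x := by
      simpa using ((h0.pow 2).const_mul (a / 2))
    have e5 : HasDerivAt (fun x' => beta * f x' * iteratedDeriv 4 f x')
        (beta * (deriv f x * iteratedDeriv 4 f x + f x * iteratedDeriv 5 f x)) x := by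
      have := ((h0.mul (hdn 4)).const_mul beta)
      simp only [Pi.mul_apply, mul_assoc] at this ⊢
      exact this
    have e6 : HasDerivAt (fun x' => beta * deriv f x' * iteratedDeriv 3 f x')
        (beta * (iteratedDeriv 2 f x * iteratedDeriv 3 f x + deriv f x * iteratedDeriv 4 f x)) x := by
      have := ((h1.mul (hdn 3)).const_mul beta)
      simp only [Pi.mul_apply, mul_assoc] at this ⊢
      exact this
    have e7 : HasDerivAt (fun x' => beta / 2 * (iteratedDeriv 2 f x') ^ 2)
        (beta / 2 * (2 * iteratedDeriv 2 f x ^ 1 * iteratedDeriv 3 f x)) x := by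
      simpa using (((hdn 2).pow 2).const_mul (beta / 2))
    have e8 : HasDerivAt (fun x' => mu * f x' * iteratedDeriv 2 f x')
        (mu * (deriv f x * iteratedDeriv 2 f x + f x * iteratedDeriv 3 f x)) x := by
      have := ((h0.mul (hdn 2)).const_mul mu)
      simp only [Pi.mul_apply, mul_assoc] at this ⊢
      exact this
    have e9 : HasDerivAt (fun x' => mu / 2 * (deriv f x') ^ 2)
        (mu / 2 * (2 * deriv f x ^ 1 * iteratedDeriv 2 f x)) x := by
      simpa using ((h1.pow 2).const_mul (mu / 2))
    exact ((((((e4.add e3).add e2).add e5).sub e6).add e7).add e8).sub e9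
  rw [H.deriv]; ring

/-- Conservation law of the Gardner-Kawahara equation from the multiplier `Λ = u`:
`D_t(u²/2) + D_x(-(α/4)u⁴ + (λ/3)u³ + (a/2)u² + β u u_xxxx - β u_x u_xxx
  + (β/2) u_xx² + μ u u_xx - (μ/2) u_x²) = 0` on solutions. -/
theorem gardner_kawahara_conservation_law_multiplier_u
    (a lam alpha mu beta : ℝ) (u : ℝ → ℝ → ℝ)
    (hu : ContDiff ℝ (⊤ : ℕ∞) (fun p : ℝ × ℝ => u p.1 p.2))
    (hsol : ∀ x t : ℝ,
      deriv (fun t' => u x t') t + a * deriv (fun x' => u x' t) x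
        + lam * u x t * deriv (fun x' => u x' t) x
        - alpha * (u x t) ^ 2 * deriv (fun x' => u x' t) x
        + mu * iteratedDeriv 3 (fun x' => u x' t) x
        + beta * iteratedDeriv 5 (fun x' => u x' t) x = 0) :
    ∀ x t : ℝ,
      deriv (fun t' => (u x t') ^ 2 / 2) t
        + deriv (fun x' =>
            -(alpha / 4) * (u x' t) ^ 4 + lam / 3 * (u x' t) ^ 3
              + a / 2 * (u x' t) ^ 2
              + beta * u x' t * iteratedDeriv 4 (fun y => u y t) x'
              - beta * deriv (fun y => u y t) x' * iteratedDeriv 3 (fun y => u y t) x'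
              + beta / 2 * (iteratedDeriv 2 (fun y => u y t) x') ^ 2
              + mu * u x' t * iteratedDeriv 2 (fun y => u y t) x'
              - mu / 2 * (deriv (fun y => u y t) x') ^ 2) x = 0 := by
  intro x t
  have hfx : ContDiff ℝ (⊤ : ℕ∞) (fun y => u y t) :=
    hu.comp (contDiff_id.prodMk contDiff_const)
  have hft : ContDiff ℝ (⊤ : ℕ∞) (fun s => u x s) :=
    hu.comp (contDiff_const.prodMk contDiff_id)
  have ht : HasDerivAt (fun t' => (u x t') ^ 2 / 2)
      (u x t * deriv (fun t' => u x t') t) t := by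
    have h0 : HasDerivAt (fun t' => u x t') (deriv (fun t' => u x t') t) t :=
      (hft.differentiable (by simp) t).hasDerivAt
    have := (h0.pow 2).div_const 2
    exact this.congr_deriv (by norm_num; ring)
  have hx := flux_deriv a lam alpha mu beta (fun y => u y t) hfx x
  beta_reduce at hx
  rw [ht.deriv, hx]
  have h := hsol x t
  linear_combination (u x t) * h
end

section
/- Every solution Λ(x,t,u) = p(t) + q(t)·u + r(x,t) of the multiplier determining system Λ_uu = 0, Λ_xu = 0, −Λ_t − β Λ_xxxxx − μ Λ_xxx − (−α u² + λ u + a)Λ_x = 0, with α ≠ 0 and λ ≠ 0, must have Λ_x = 0, Λ_t = 0, and Λ_u constant; hence the multiplier space is spanned by Λ₁ = 1 and Λ₂ = u. -/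
/-- Classification of zero-order multipliers: any multiplier of the form
`Λ(x,t,u) = p(t) + q(t) u + r(x,t)` solving the determining system (with `α ≠ 0`,
`λ ≠ 0`) has `Λ_x = 0`, `Λ_t = 0` and constant `Λ_u`; hence the multiplier
space is spanned by `Λ₁ = 1` and `Λ₂ = u`. -/
theorem gardner_kawahara_multiplier_classification
    (a lam alpha mu beta : ℝ) (halpha : alpha ≠ 0) (hlam : lam ≠ 0)
    (p q : ℝ → ℝ) (r : ℝ → ℝ → ℝ)
    (hp : ContDiff ℝ (⊤ : ℕ∞) p) (hq : ContDiff ℝ (⊤ : ℕ∞) q)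
    (hr : ContDiff ℝ (⊤ : ℕ∞) (fun s : ℝ × ℝ => r s.1 s.2))
    (Lam : ℝ → ℝ → ℝ → ℝ)
    (hLam : ∀ x t v, Lam x t v = p t + q t * v + r x t)
    (hdet : ∀ x t v : ℝ,
      -deriv (fun t' => Lam x t' v) t
        - beta * iteratedDeriv 5 (fun x' => Lam x' t v) x
        - mu * iteratedDeriv 3 (fun x' => Lam x' t v) x
        - (-alpha * v ^ 2 + lam * v + a) * deriv (fun x' => Lam x' t v) x = 0) :
    (∀ x t v : ℝ, deriv (fun x' => Lam x' t v) x = 0)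
    ∧ (∀ x t v : ℝ, deriv (fun t' => Lam x t' v) t = 0)
    ∧ (∃ k : ℝ, ∀ x t v : ℝ, deriv (fun v' => Lam x t v') v = k)
    ∧ (∃ C₁ C₂ : ℝ, ∀ x t v : ℝ, Lam x t v = C₁ + C₂ * v) := by
  have hpd : Differentiable ℝ p := hp.differentiable (by simp)
  have hqd : Differentiable ℝ q := hq.differentiable (by simp)
  have hrd : Differentiable ℝ (fun s : ℝ × ℝ => r s.1 s.2) := hr.differentiable (by simp)
  have hrx : ∀ t, Differentiable ℝ (fun x' => r x' t) := by
    intro t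
    exact hrd.comp (differentiable_id.prodMk (differentiable_const t))
  have hrt : ∀ x, Differentiable ℝ (fun t' => r x t') := by
    intro x
    exact hrd.comp ((differentiable_const x).prodMk differentiable_id)
  have hLx : ∀ x t v, deriv (fun x' => Lam x' t v) x = deriv (fun x' => r x' t) x := by
    intro x t v
    have h : (fun x' => Lam x' t v) = fun x' => (p t + q t * v) + r x' t := by
      funext x'; rw [hLam]
    rw [h, deriv_const_add]
  have hLt : ∀ x t v, deriv (fun t' => Lam x t' v) t
      = deriv p t + deriv q t * v + deriv (fun t' => r x t') t := by
    intro x t v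
    have he : (fun t' => Lam x t' v) = fun t' => (p t' + q t' * v) + r x t' := by
      funext t'; rw [hLam]
    rw [he, deriv_fun_add ((hpd t).fun_add ((hqd t).mul_const v)) (hrt x t),
        deriv_fun_add (hpd t) ((hqd t).mul_const v), deriv_mul_const (hqd t)]
  have hI : ∀ (n : ℕ) (x t v : ℝ), iteratedDeriv (n+1) (fun x' => Lam x' t v) x
      = iteratedDeriv n (fun y => deriv (fun x' => r x' t) y) x := by
    intro n x t v
    rw [iteratedDeriv_succ']
    congr 1
    funext y
    have h : (fun x' => Lam x' t v) = fun x' => (p t + q t * v) + r x' t := by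
      funext x'; rw [hLam]
    rw [h, deriv_const_add]
  have key : ∀ x t v : ℝ, -(deriv p t + deriv q t * v + deriv (fun t' => r x t') t)
      - beta * iteratedDeriv 4 (fun y => deriv (fun x' => r x' t) y) x
      - mu * iteratedDeriv 2 (fun y => deriv (fun x' => r x' t) y) x
      - (-alpha * v ^ 2 + lam * v + a) * deriv (fun x' => r x' t) x = 0 := by
    intro x t v
    have h := hdet x t v
    rw [hLt, hLx, show (5:ℕ) = 4+1 from rfl, show (3:ℕ) = 2+1 from rfl,
        hI 4 x t v, hI 2 x t v] at h
    exact h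
  have hrx0 : ∀ x t : ℝ, deriv (fun x' => r x' t) x = 0 := by
    intro x t
    have h1 := key x t 1
    have h0 := key x t 0
    have hm := key x t (-1)
    have h2 : alpha * deriv (fun x' => r x' t) x = 0 := by
      linear_combination (h1 + hm - 2 * h0) / 2
    exact (mul_eq_zero.mp h2).resolve_left halpha
  have hI0 : ∀ (n : ℕ) (x : ℝ), iteratedDeriv n (fun _ : ℝ => (0:ℝ)) x = 0 := by
    intro n
    induction n with
    | zero => intro x; simp [iteratedDeriv_zero]
    | succ n ih =>
        intro x
        rw [iteratedDeriv_succ']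
        have : deriv (fun _ : ℝ => (0:ℝ)) = fun _ : ℝ => (0:ℝ) := by
          funext y; simp
        rw [this]
        exact ih x
  have hzf : ∀ t : ℝ, (fun y => deriv (fun x' => r x' t) y) = fun _ : ℝ => (0:ℝ) := by
    intro t; funext y; exact hrx0 y t
  have key2 : ∀ x t v : ℝ, deriv p t + deriv q t * v + deriv (fun t' => r x t') t = 0 := by
    intro x t v
    have h := key x t v
    rw [hzf, hrx0, hI0, hI0] at h
    linarith
  have hq0 : ∀ t, deriv q t = 0 := by
    intro t
    have h0 := key2 0 t 0
    have h1 := key2 0 t 1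
    linarith
  have hqconst : ∀ t, q t = q 0 := fun t =>
    is_const_of_deriv_eq_zero hqd hq0 t 0
  refine ⟨?_, ?_, ?_, ?_⟩
  · intro x t v
    rw [hLx]; exact hrx0 x t
  · intro x t v
    rw [hLt]
    exact key2 x t v
  · refine ⟨q 0, ?_⟩
    intro x t v
    have h : (fun v' => Lam x t v') = fun v' => q t * v' + (p t + r x t) := by
      funext v'; rw [hLam]; ring
    rw [h, deriv_add_const]
    rw [deriv_const_mul _ differentiableAt_fun_id]
    simp [hqconst t]
  · refine ⟨p 0 + r 0 0, q 0, ?_⟩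
    intro x t v
    have hrc : r x t = r 0 t := is_const_of_deriv_eq_zero (hrx t) (fun y => hrx0 y t) x 0
    have hgd : Differentiable ℝ (fun t' => p t' + r 0 t') := hpd.add (hrt 0)
    have hgz : ∀ t, deriv (fun t' => p t' + r 0 t') t = 0 := by
      intro t
      rw [deriv_fun_add (hpd t) (hrt 0 t)]
      have h0 := key2 0 t 0
      have hqt := hq0 t
      linarith
    have hgc : p t + r 0 t = p 0 + r 0 0 := is_const_of_deriv_eq_zero hgd hgz t 0
    rw [hLam, hrc, hqconst t]
    linarith
end
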